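/- arXiv:2106.09552 — 2 statements merged into one kernel-verified Lean document; each statement's English description precedes it below -/
import Mathlib

section
/- Let V be a finite set, π strictly positive probability weights on V, and η, π probability vectors. Then the total variation distance between the Multinomial distributions μ_{k,η} and μ_{k,π} (k trials) satisfies ‖μ_{k,η} − μ_{k,π}‖_TV ≤ √(e·k) · √(∑_{x∈V} π(x)·(η(x)/π(x) − 1)^2). -/
/-!
By Cauchy–Schwarz, `(∑ |μ - ν|)² ≤ ∑ (μ - ν)² / ν`, the χ²-divergence of `μ` from `ν`. For
multinomials this divergence tensorizes: `μ_{k,η}² / μ_{k,π} = μ_{k,η²/π}` pointwise, so the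
multinomial theorem gives `χ²(μ_{k,η} ‖ μ_{k,π}) = (1 + a)ᵏ - 1` with `a = ∑ π (η/π - 1)²`.
Since the total variation distance is also at most `1`, it remains to check
`min 1 ((1 + a)ᵏ - 1) ≤ e k a`: for `k a ≤ 1` use `(1 + a)ᵏ - 1 ≤ e^{ka} - 1 ≤ k a e^{ka}`.
-/

open Finset

/-- Multinomial distribution with `k` trials and success probabilities `p`,
on configurations `ξ : V → ℕ` with total sum `k` (encoded via `Fin (k+1)`). -/
noncomputable def multinomialPMF {V : Type*} [Fintype V] [DecidableEq V] (k : ℕ) (p : V → ℝ)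
    (ξ : {ξ : V → Fin (k + 1) // ∑ x, (ξ x : ℕ) = k}) : ℝ :=
  (Nat.factorial k : ℝ) * ∏ x, p x ^ (ξ.1 x : ℕ) / (Nat.factorial (ξ.1 x) : ℝ)

section Multinomial

variable {V : Type*} [Fintype V] [DecidableEq V] {k : ℕ}

theorem multinomialPMF_eq_multinomial_mul_prod (p : V → ℝ)
    (ξ : {ξ : V → Fin (k + 1) // ∑ x, (ξ x : ℕ) = k}) :
    multinomialPMF k p ξ =
      Nat.multinomial univ (fun x => (ξ.1 x : ℕ)) * ∏ x, p x ^ (ξ.1 x : ℕ) := by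
  have hspec := Nat.multinomial_spec univ (fun x => (ξ.1 x : ℕ))
  rw [ξ.2] at hspec
  have hB : ∏ x, ((ξ.1 x : ℕ).factorial : ℝ) ≠ 0 := by positivity
  rw [multinomialPMF, prod_div_distrib, ← hspec]
  push_cast
  field_simp

theorem sum_multinomialPMF (p : V → ℝ) :
    ∑ ξ, multinomialPMF k p ξ = (∑ x, p x) ^ k := by
  rw [sum_pow_eq_sum_piAntidiag]
  refine sum_bij' (fun ξ _ x => ξ.1 x)
    (fun ν hν => ⟨fun x => ⟨ν x, Nat.lt_succ_of_le ?_⟩, (mem_piAntidiag.1 hν).1⟩)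
    (fun ξ _ => mem_piAntidiag.2 ⟨ξ.2, fun x _ => mem_univ x⟩) (fun _ _ => mem_univ _)
    (fun _ _ => rfl) (fun _ _ => rfl)
    (fun ξ _ => multinomialPMF_eq_multinomial_mul_prod p ξ)
  rw [← (mem_piAntidiag.1 hν).1]
  exact single_le_sum (fun _ _ => Nat.zero_le _) (mem_univ x)

theorem multinomialPMF_nonneg {p : V → ℝ} (hp : ∀ x, 0 ≤ p x)
    (ξ : {ξ : V → Fin (k + 1) // ∑ x, (ξ x : ℕ) = k}) : 0 ≤ multinomialPMF k p ξ := by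
  unfold multinomialPMF
  exact mul_nonneg (by positivity)
    (prod_nonneg fun x _ => div_nonneg (pow_nonneg (hp x) _) (by positivity))

theorem multinomialPMF_pos {p : V → ℝ} (hp : ∀ x, 0 < p x)
    (ξ : {ξ : V → Fin (k + 1) // ∑ x, (ξ x : ℕ) = k}) : 0 < multinomialPMF k p ξ := by
  unfold multinomialPMF
  exact mul_pos (by positivity) (prod_pos fun x _ => div_pos (pow_pos (hp x) _) (by positivity))

theorem sq_multinomialPMF_div (p q : V → ℝ)
    (ξ : {ξ : V → Fin (k + 1) // ∑ x, (ξ x : ℕ) = k}) :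
    multinomialPMF k p ξ ^ 2 / multinomialPMF k q ξ
      = multinomialPMF k (fun x => p x ^ 2 / q x) ξ := by
  have hk : (k.factorial : ℝ) ≠ 0 := by positivity
  have hB : ∏ x, ((ξ.1 x : ℕ).factorial : ℝ) ≠ 0 := by positivity
  have hpow (x : V) :
      (p x ^ 2 / q x) ^ (ξ.1 x : ℕ) = (p x ^ (ξ.1 x : ℕ)) ^ 2 / q x ^ (ξ.1 x : ℕ) := by
    rw [div_pow, pow_right_comm]
  simp only [multinomialPMF, hpow, prod_div_distrib, prod_pow]
  generalize ∏ x, q x ^ (ξ.1 x : ℕ) = C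
  rcases eq_or_ne C 0 with rfl | hC
  · simp
  field_simp

theorem sum_sq_multinomialPMF_div (p q : V → ℝ) :
    ∑ ξ, multinomialPMF k p ξ ^ 2 / multinomialPMF k q ξ = (∑ x, p x ^ 2 / q x) ^ k := by
  simp only [sq_multinomialPMF_div, sum_multinomialPMF]

end Multinomial

section ChiSquared

variable {ι : Type*} [Fintype ι] {p q : ι → ℝ}

theorem sum_sub_sq_div_eq_sum_sq_div_sub_one (hq : ∀ i, q i ≠ 0) (hp1 : ∑ i, p i = 1)
    (hq1 : ∑ i, q i = 1) : ∑ i, (p i - q i) ^ 2 / q i = ∑ i, p i ^ 2 / q i - 1 := by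
  have hexpand : ∀ i, (p i - q i) ^ 2 / q i = p i ^ 2 / q i - 2 * p i + q i := fun i => by
    field_simp [hq i]
    ring
  simp only [hexpand, sum_add_distrib, sum_sub_distrib, ← mul_sum, hp1, hq1]
  ring

theorem sq_sum_abs_sub_le_sum_sub_sq_div (hq : ∀ i, 0 < q i) (hq1 : ∑ i, q i = 1) :
    (∑ i, |p i - q i|) ^ 2 ≤ ∑ i, (p i - q i) ^ 2 / q i := by
  simpa [hq1, sq_abs] using sq_sum_div_le_sum_sq_div univ (fun i => |p i - q i|) fun i _ => hq i

theorem sum_abs_sub_le_two (hp : ∀ i, 0 ≤ p i) (hq : ∀ i, 0 ≤ q i) (hp1 : ∑ i, p i = 1)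
    (hq1 : ∑ i, q i = 1) : ∑ i, |p i - q i| ≤ 2 :=
  calc ∑ i, |p i - q i| ≤ ∑ i, (p i + q i) := sum_le_sum fun i _ =>
        (abs_sub _ _).trans_eq (by rw [abs_of_nonneg (hp i), abs_of_nonneg (hq i)])
    _ = 2 := by rw [sum_add_distrib, hp1, hq1]; norm_num

end ChiSquared

open Real in
theorem exp_sub_one_le_mul_exp (t : ℝ) : exp t - 1 ≤ t * exp t := by
  have h := mul_le_mul_of_nonneg_right (one_sub_le_exp_neg t) (exp_pos t).le
  rw [← exp_add, neg_add_cancel, exp_zero] at h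
  linarith

open Real in
theorem min_one_one_add_pow_sub_one_le {a : ℝ} (ha : 0 ≤ a) (k : ℕ) :
    min 1 ((1 + a) ^ k - 1) ≤ exp 1 * k * a := by
  have hka : 0 ≤ k * a := by positivity
  rcases le_or_gt (k * a) 1 with hle | hgt
  · calc min 1 ((1 + a) ^ k - 1) ≤ (1 + a) ^ k - 1 := min_le_right _ _
      _ ≤ exp (k * a) - 1 := by
        rw [exp_nat_mul]
        gcongr
        linarith [add_one_le_exp a]
      _ ≤ k * a * exp (k * a) := exp_sub_one_le_mul_exp _
      _ ≤ k * a * exp 1 := by gcongr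
      _ = exp 1 * k * a := by ring
  · calc min 1 ((1 + a) ^ k - 1) ≤ k * a := (min_le_left _ _).trans hgt.le
      _ ≤ exp 1 * (k * a) := le_mul_of_one_le_left hka (one_le_exp zero_le_one)
      _ = exp 1 * k * a := by ring

theorem tv_distance_multinomials_general {V : Type*} [Fintype V] [DecidableEq V]
    (k : ℕ) (π η : V → ℝ)
    (hπpos : ∀ x, 0 < π x) (hπ1 : ∑ x, π x = 1)
    (hηpos : ∀ x, 0 ≤ η x) (hη1 : ∑ x, η x = 1) :
    (1 / 2) * ∑ ξ : {ξ : V → Fin (k + 1) // ∑ x, (ξ x : ℕ) = k},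
        |multinomialPMF k η ξ - multinomialPMF k π ξ|
      ≤ Real.sqrt (Real.exp 1 * k) * Real.sqrt (∑ x, π x * (η x / π x - 1) ^ 2) := by
  set a := ∑ x, π x * (η x / π x - 1) ^ 2
  have ha : 0 ≤ a := sum_nonneg fun x _ => mul_nonneg (hπpos x).le (sq_nonneg _)
  have hηπ : ∑ x, η x ^ 2 / π x = 1 + a := by
    have hπ0 x : π x ≠ 0 := (hπpos x).ne'
    have ha' : a = ∑ x, (η x - π x) ^ 2 / π x := sum_congr rfl fun x _ => by field_simp [hπ0 x]
    rw [ha', sum_sub_sq_div_eq_sum_sq_div_sub_one hπ0 hη1 hπ1]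
    ring
  have hμη : ∑ ξ, multinomialPMF k η ξ = 1 := by rw [sum_multinomialPMF, hη1, one_pow]
  have hμπ : ∑ ξ, multinomialPMF k π ξ = 1 := by rw [sum_multinomialPMF, hπ1, one_pow]
  have hμπpos := multinomialPMF_pos (k := k) hπpos
  set S := ∑ ξ, |multinomialPMF k η ξ - multinomialPMF k π ξ|
  have hS2 : S ≤ 2 :=
    sum_abs_sub_le_two (multinomialPMF_nonneg hηpos) (fun ξ => (hμπpos ξ).le) hμη hμπ
  have hSχ : S ^ 2 ≤ (1 + a) ^ k - 1 := by
    have hχ := sum_sub_sq_div_eq_sum_sq_div_sub_one (fun ξ => (hμπpos ξ).ne') hμη hμπ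
    rw [sum_sq_multinomialPMF_div, hηπ] at hχ
    exact hχ ▸ sq_sum_abs_sub_le_sum_sub_sq_div hμπpos hμπ
  have hS0 : 0 ≤ S := sum_nonneg fun _ _ => abs_nonneg _
  have hTV : (S / 2) ^ 2 ≤ Real.exp 1 * k * a :=
    (le_min (by nlinarith) (by nlinarith)).trans (min_one_one_add_pow_sub_one_le ha k)
  rw [← Real.sqrt_mul (by positivity), one_div_mul_eq_div]
  exact (le_abs_self _).trans (Real.abs_le_sqrt hTV)

theorem tv_distance_multinomials {V : Type*} [Fintype V] [DecidableEq V] [Nonempty V]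
    (k : ℕ) (π η : V → ℝ)
    (hπpos : ∀ x, 0 < π x) (hπ1 : ∑ x, π x = 1)
    (hηpos : ∀ x, 0 ≤ η x) (hη1 : ∑ x, η x = 1) :
    (1 / 2) * ∑ ξ : {ξ : V → Fin (k + 1) // ∑ x, (ξ x : ℕ) = k},
        |multinomialPMF k η ξ - multinomialPMF k π ξ|
      ≤ Real.sqrt (Real.exp 1 * k) * Real.sqrt (∑ x, π x * (η x / π x - 1) ^ 2) :=
  tv_distance_multinomials_general k π η hπpos hπ1 hηpos hη1
end

section
/- Let V be a finite set, π strictly positive probability weights, k ∈ ℕ, and x ≠ y ∈ V. For f : Ω_k → ℝ define the Binomial thermalization operator (P^{Bin}_{xy} f)(ξ) = E[f(Ξ^{xy}_ξ)], where Ξ^{xy}_ξ replaces (ξ(x), ξ(y)) by (Y, ξ(x)+ξ(y)−Y) with Y ~ Binomial(ξ(x)+ξ(y), π(x)/(π(x)+π(y))). For a probability vector η on V, define (Λ_k f)(η) = E_{Multinomial(k,η)}[f], and let η^{xy} be the averaged vector: η^{xy}(x) = (π(x)/(π(x)+π(y)))(η(x)+η(y)), η^{xy}(y) = (π(y)/(π(x)+π(y)))(η(x)+η(y)),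 η^{xy}(z) = η(z) otherwise. Then for every f : Ω_k → ℝ and every probability vector η: (Λ_k (P^{Bin}_{xy} f))(η) = (Λ_k f)(η^{xy}). -/
/-!
Summing the multinomial weight of `ξ` against the kernel into a fixed `ζ` only sees the `ξ` that
agree with `ζ` off `{x, y}` and carry the same number `m = ζ x + ζ y` of particles there; they are
parametrized by the antidiagonal of `m`. Their multinomial weights share the factor coming from
off `{x, y}`, and the remaining factors `η x ^ i / i! * η y ^ j / j!` sum to `(η x + η y) ^ m / m!`
by the binomial theorem. The Binomial weight of `ζ x` then splits this into
`(p (η x + η y)) ^ ζ x / (ζ x)! * (q (η x + η y)) ^ ζ y / (ζ y)!`, which is how `η^{xy}` weighs `ζ`.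
-/

open Finset

/-- Transition kernel of the one-edge Binomial thermalization move at `{x,y}`:
the configuration is left unchanged off `{x, y}`, the total number
`m = ξ x + ξ y` of particles is conserved, and the new number of particles at
`x` is `Binomial(m, π x / (π x + π y))`-distributed, so that
`(P^Bin_{xy} f)(ξ) = ∑ ζ, binKernel k π x y ξ ζ * f ζ = E[f(Ξ^{xy}_ξ)]`. -/
noncomputable def binKernel {V : Type*} [Fintype V] [DecidableEq V] (k : ℕ) (π : V → ℝ)
    (x y : V) (ξ ζ : {ξ : V → Fin (k + 1) // ∑ x, (ξ x : ℕ) = k}) : ℝ :=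
  if (∀ z, z ≠ x → z ≠ y → ζ.1 z = ξ.1 z) ∧ ((ζ.1 x : ℕ) + (ζ.1 y : ℕ) = (ξ.1 x : ℕ) + (ξ.1 y : ℕ))
  then (Nat.choose ((ξ.1 x : ℕ) + (ξ.1 y : ℕ)) (ζ.1 x : ℕ) : ℝ) *
        (π x / (π x + π y)) ^ (ζ.1 x : ℕ) *
        (1 - π x / (π x + π y)) ^ ((ξ.1 x : ℕ) + (ξ.1 y : ℕ) - (ζ.1 x : ℕ))
  else 0

open scoped Nat

lemma add_pow_div_factorial {K : Type*} [Field K] [CharZero K] (a b : K) (n : ℕ) :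
    (a + b) ^ n / n ! = ∑ ij ∈ antidiagonal n, a ^ ij.1 / ij.1 ! * (b ^ ij.2 / ij.2 !) := by
  rw [(Commute.all a b).add_pow', sum_div]
  refine sum_congr rfl fun ij hij => ?_
  obtain rfl := mem_antidiagonal.1 hij
  have : ((ij.1 + ij.2)! : K) ≠ 0 := Nat.cast_ne_zero.2 (Nat.factorial_ne_zero _)
  rw [nsmul_eq_mul, Nat.cast_add_choose]
  field_simp

lemma choose_mul_pow_mul_pow_div_factorial {K : Type*} [Field K] [CharZero K]
    (p q s : K) (i j : ℕ) :
    (i + j).choose i * p ^ i * q ^ j * (s ^ (i + j) / (i + j)!)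
      = (p * s) ^ i / i ! * ((q * s) ^ j / j !) := by
  have : ((i + j)! : K) ≠ 0 := Nat.cast_ne_zero.2 (Nat.factorial_ne_zero _)
  rw [Nat.cast_add_choose]
  field_simp
  ring

/-- The state space `Ω_k`. -/
abbrev Config (V : Type*) [Fintype V] (k : ℕ) := {ξ : V → Fin (k + 1) // ∑ x, (ξ x : ℕ) = k}

section PairMove

variable {V : Type*} [Fintype V] [DecidableEq V] {k : ℕ} {x y : V}

lemma mem_compl_pair {z : V} : z ∈ ({x, y} : Finset V)ᶜ ↔ z ≠ x ∧ z ≠ y := by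
  simp

lemma Config.val_add_val_add_sum_compl (hxy : x ≠ y) (ξ : Config V k) :
    (ξ.1 x : ℕ) + ξ.1 y + ∑ z ∈ {x, y}ᶜ, (ξ.1 z : ℕ) = k := by
  rw [← sum_pair (f := fun z => (ξ.1 z : ℕ)) hxy, sum_add_sum_compl]
  exact ξ.2

lemma multinomialPMF_eq_mul_prod_compl (hxy : x ≠ y) (p : V → ℝ) (ξ : Config V k) :
    multinomialPMF k p ξ = k ! * (p x ^ (ξ.1 x : ℕ) / (ξ.1 x : ℕ)!
      * (p y ^ (ξ.1 y : ℕ) / (ξ.1 y : ℕ)! * ∏ z ∈ {x, y}ᶜ, p z ^ (ξ.1 z : ℕ) / (ξ.1 z : ℕ)!)) := by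
  rw [multinomialPMF, ← prod_mul_prod_compl {x, y}, prod_pair hxy, mul_assoc]

/-- The configurations reachable from `ζ` by redistributing the particles at `x` and `y`. -/
def pairFiber (x y : V) (ζ : Config V k) : Finset (Config V k) :=
  univ.filter fun ξ =>
    (∀ z, z ≠ x → z ≠ y → ζ.1 z = ξ.1 z) ∧ (ζ.1 x : ℕ) + ζ.1 y = (ξ.1 x : ℕ) + ξ.1 y

lemma binKernel_eq_ite (π : V → ℝ) (ξ ζ : Config V k) :
    binKernel k π x y ξ ζ = if ξ ∈ pairFiber x y ζ then
      ((ζ.1 x : ℕ) + ζ.1 y).choose (ζ.1 x) * (π x / (π x + π y)) ^ (ζ.1 x : ℕ)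
        * (1 - π x / (π x + π y)) ^ (ζ.1 y : ℕ) else 0 := by
  simp only [binKernel, pairFiber, mem_filter, mem_univ, true_and]
  split_ifs with h
  · rw [← h.2, Nat.add_sub_cancel_left]
  · rfl

def Config.redistribute (hxy : x ≠ y) (ζ : Config V k) (ij : ℕ × ℕ)
    (hij : ij ∈ antidiagonal ((ζ.1 x : ℕ) + ζ.1 y)) : Config V k :=
  have hk := ζ.val_add_val_add_sum_compl hxy
  have hij := mem_antidiagonal.1 hij
  ⟨Function.update (Function.update ζ.1 x ⟨ij.1, by omega⟩) y ⟨ij.2, by omega⟩, by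
    rw [← sum_add_sum_compl {x, y}, sum_pair hxy]
    have hcompl : ∀ z ∈ ({x, y} : Finset V)ᶜ, Function.update (Function.update ζ.1 x
        ⟨ij.1, by omega⟩) y ⟨ij.2, by omega⟩ z = ζ.1 z := fun z hz => by
      obtain ⟨hzx, hzy⟩ := mem_compl_pair.1 hz
      rw [Function.update_of_ne hzy, Function.update_of_ne hzx]
    simp only [Function.update_self, Function.update_of_ne hxy]
    rw [sum_congr rfl fun z hz => congrArg Fin.val (hcompl z hz)]
    omega⟩

section Redistribute

variable (hxy : x ≠ y) (ζ : Config V k) (ij : ℕ × ℕ)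
  (hij : ij ∈ antidiagonal ((ζ.1 x : ℕ) + ζ.1 y))

@[simp] lemma Config.redistribute_apply_left : ((ζ.redistribute hxy ij hij).1 x : ℕ) = ij.1 := by
  simp [Config.redistribute, Function.update_of_ne hxy]

@[simp] lemma Config.redistribute_apply_right : ((ζ.redistribute hxy ij hij).1 y : ℕ) = ij.2 := by
  simp [Config.redistribute]

lemma Config.redistribute_apply_of_ne {z : V} (hzx : z ≠ x) (hzy : z ≠ y) :
    (ζ.redistribute hxy ij hij).1 z = ζ.1 z := by
  simp [Config.redistribute, Function.update_of_ne hzx, Function.update_of_ne hzy]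

end Redistribute

lemma sum_pairFiber {M : Type*} [AddCommMonoid M] (hxy : x ≠ y) (ζ : Config V k)
    (g : ℕ → ℕ → M) :
    ∑ ξ ∈ pairFiber x y ζ, g (ξ.1 x) (ξ.1 y)
      = ∑ ij ∈ antidiagonal ((ζ.1 x : ℕ) + ζ.1 y), g ij.1 ij.2 := by
  refine sum_bij' (fun ξ _ => ((ξ.1 x : ℕ), (ξ.1 y : ℕ)))
    (fun ij hij => ζ.redistribute hxy ij hij) (fun ξ hξ => ?_) (fun ij hij => ?_)
    (fun ξ hξ => ?_) (fun ij hij => ?_) (fun ξ _ => rfl)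
  · exact mem_antidiagonal.2 (mem_filter.1 hξ).2.2.symm
  · refine mem_filter.2 ⟨mem_univ _, fun z hzx hzy => ?_, ?_⟩
    · rw [ζ.redistribute_apply_of_ne hxy ij hij hzx hzy]
    · simpa using (mem_antidiagonal.1 hij).symm
  · obtain ⟨hoff, -⟩ := (mem_filter.1 hξ).2
    ext z
    by_cases hzx : z = x
    · subst hzx; simp
    by_cases hzy : z = y
    · subst hzy; simp
    rw [ζ.redistribute_apply_of_ne hxy _ _ hzx hzy, hoff z hzx hzy]
  · simp

end PairMove

section Intertwining

variable {V : Type*} [Fintype V] [DecidableEq V] {k : ℕ} {x y : V}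

/-- The averaged vector `η^{xy}`. -/
noncomputable def pairAverage (π : V → ℝ) (x y : V) (η : V → ℝ) : V → ℝ := fun z =>
  if z = x then π x / (π x + π y) * (η x + η y)
  else if z = y then π y / (π x + π y) * (η x + η y)
  else η z

theorem sum_multinomialPMF_mul_binKernel {π : V → ℝ} (hπ : π x + π y ≠ 0) (hxy : x ≠ y)
    (η : V → ℝ) (ζ : Config V k) :
    ∑ ξ, multinomialPMF k η ξ * binKernel k π x y ξ ζ
      = multinomialPMF k (pairAverage π x y η) ζ := by
  set r : ℕ := (ζ.1 x : ℕ)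
  set t : ℕ := (ζ.1 y : ℕ)
  set p := π x / (π x + π y)
  set R := ∏ z ∈ {x, y}ᶜ, η z ^ (ζ.1 z : ℕ) / (ζ.1 z : ℕ)!
  set B : ℝ := (r + t).choose r * p ^ r * (1 - p) ^ t with hB
  have hfiber_tail : ∀ ξ ∈ pairFiber x y ζ,
      ∏ z ∈ {x, y}ᶜ, η z ^ (ξ.1 z : ℕ) / (ξ.1 z : ℕ)! = R := fun ξ hξ =>
    prod_congr rfl fun z hz => by
      obtain ⟨hzx, hzy⟩ := mem_compl_pair.1 hz
      rw [(mem_filter.1 hξ).2.1 z hzx hzy]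
  have haverage_tail :
      ∏ z ∈ {x, y}ᶜ, pairAverage π x y η z ^ (ζ.1 z : ℕ) / (ζ.1 z : ℕ)! = R :=
    prod_congr rfl fun z hz => by
      obtain ⟨hzx, hzy⟩ := mem_compl_pair.1 hz
      rw [pairAverage, if_neg hzx, if_neg hzy]
  have hq : 1 - p = π y / (π x + π y) := by
    rw [eq_div_iff hπ, sub_mul, div_mul_cancel₀ _ hπ]
    ring
  calc ∑ ξ, multinomialPMF k η ξ * binKernel k π x y ξ ζ
      = ∑ ξ ∈ pairFiber x y ζ, multinomialPMF k η ξ * B := by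
        simp_rw [binKernel_eq_ite, mul_ite, mul_zero]
        exact Fintype.sum_ite_mem _ _
    _ = k ! * R * B * ∑ ξ ∈ pairFiber x y ζ,
          η x ^ (ξ.1 x : ℕ) / (ξ.1 x : ℕ)! * (η y ^ (ξ.1 y : ℕ) / (ξ.1 y : ℕ)!) := by
        rw [mul_sum]
        refine sum_congr rfl fun ξ hξ => ?_
        rw [multinomialPMF_eq_mul_prod_compl hxy, hfiber_tail ξ hξ]
        ring
    _ = k ! * R * B * ((η x + η y) ^ (r + t) / (r + t)!) := by
        rw [sum_pairFiber hxy ζ fun i j => η x ^ i / i ! * (η y ^ j / j !),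
          add_pow_div_factorial]
    _ = k ! * R * ((p * (η x + η y)) ^ r / r ! * (((1 - p) * (η x + η y)) ^ t / t !)) := by
        rw [mul_assoc _ B, hB, choose_mul_pow_mul_pow_div_factorial]
    _ = multinomialPMF k (pairAverage π x y η) ζ := by
        rw [multinomialPMF_eq_mul_prod_compl hxy, haverage_tail, pairAverage, pairAverage,
          if_pos rfl, if_neg hxy.symm, if_pos rfl, ← hq]
        ring

end Intertwining

theorem multinomial_intertwining_single_edge_general {V : Type*} [Fintype V] [DecidableEq V]
    (k : ℕ) (π : V → ℝ)
    (hπpos : ∀ z, 0 < π z)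
    (x y : V) (hxy : x ≠ y)
    (f : {ξ : V → Fin (k + 1) // ∑ x, (ξ x : ℕ) = k} → ℝ)
    (η : V → ℝ)
    (ηxy : V → ℝ)
    (hηxy : ηxy = fun z =>
      if z = x then π x / (π x + π y) * (η x + η y)
      else if z = y then π y / (π x + π y) * (η x + η y)
      else η z) :
    ∑ ξ : {ξ : V → Fin (k + 1) // ∑ x, (ξ x : ℕ) = k},
        multinomialPMF k η ξ * ∑ ζ, binKernel k π x y ξ ζ * f ζ
      = ∑ ξ : {ξ : V → Fin (k + 1) // ∑ x, (ξ x : ℕ) = k},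
          multinomialPMF k ηxy ξ * f ξ := by
  have hπ : π x + π y ≠ 0 := (add_pos (hπpos x) (hπpos y)).ne'
  simp_rw [mul_sum, ← mul_assoc]
  rw [sum_comm]
  simp_rw [← sum_mul, sum_multinomialPMF_mul_binKernel hπ hxy, hηxy]
  rfl

/-- Single-edge Multinomial intertwining between the Averaging process and the
Binomial Splitting process: `Λ_k (P^Bin_{xy} f) (η) = Λ_k f (η^{xy})`. -/
theorem multinomial_intertwining_single_edge {V : Type*} [Fintype V] [DecidableEq V]
    [Nonempty V] (k : ℕ) (π : V → ℝ)
    (hπpos : ∀ z, 0 < π z) (hπ1 : ∑ z, π z = 1)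
    (x y : V) (hxy : x ≠ y)
    (f : {ξ : V → Fin (k + 1) // ∑ x, (ξ x : ℕ) = k} → ℝ)
    (η : V → ℝ) (hηpos : ∀ z, 0 ≤ η z) (hη1 : ∑ z, η z = 1)
    (ηxy : V → ℝ)
    (hηxy : ηxy = fun z =>
      if z = x then π x / (π x + π y) * (η x + η y)
      else if z = y then π y / (π x + π y) * (η x + η y)
      else η z) :
    ∑ ξ : {ξ : V → Fin (k + 1) // ∑ x, (ξ x : ℕ) = k},
        multinomialPMF k η ξ * ∑ ζ, binKernel k π x y ξ ζ * f ζ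
      = ∑ ξ : {ξ : V → Fin (k + 1) // ∑ x, (ξ x : ℕ) = k},
          multinomialPMF k ηxy ξ * f ξ :=
  multinomial_intertwining_single_edge_general k π hπpos x y hxy f η ηxy hηxy
end
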